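/- arXiv:2004.00359 — 4 statements merged into one kernel-verified Lean document; each statement's English description precedes it below -/
import Mathlib

section
/- For symmetric positive-definite matrices M_h, M_e, M_{p,i}, M_{d,i} and any matrix C, suppose sequences h^{n+1/2}, e^n, p_i^n satisfy the leapfrog scheme: M_h (h^{n+1/2}-h^{n-1/2})/τ + C e^n = 0, M_e (e^{n+1}-e^n)/τ + Σ_i (p_i^{n+1}-p_i^n)/τ - Cᵀ h^{n+1/2} = 0, and M_{d,i}(p_i^{n+1}-p_i^n)/τ + M_{p,i}(p_i^{n+1}+p_i^n)/2 = (e^{n+1}+e^n)/2. Define the discrete energy E^n = ½( (h^{n+1/2})ᵀ M_h h^{n-1/2} + (e^n)ᵀ M_e e^n + Σ_i (p_i^n)ᵀ M_{p,i} p_i^n ). Then for all n ≥ 0, (E^{n+1} - E^n)/τ = - Σ_i ((p_i^{n+1}-p_i^n)/τ)ᵀ M_{d,i} ((p_i^{n+1}-p_i^n)/τ). -/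
/-!
Testing the three scheme equations against `h^{n+1/2}`, the average `(e^{n+1} + e^n)/2` and the
increment `(p_i^{n+1} - p_i^n)/τ` turns each into a balance law for one part of the energy.
The coupling terms `h ⬝ C e` and `e ⬝ δp` appear with opposite signs in these laws and cancel when
they are added, leaving only the dissipation through the `M_{d,i}`. The symmetry of `M_h`, `M_e`
and `M_{p,i}` is what turns each difference of quadratic forms into a product of a sum with a
difference.
-/

open Matrix

namespace Matrix

variable {R : Type*} [CommRing R] {ι : Type*} [Fintype ι]

theorem IsSymm.dotProduct_mulVec_comm {M : Matrix ι ι R} (hM : M.IsSymm) (x y : ι → R) :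
    x ⬝ᵥ M *ᵥ y = y ⬝ᵥ M *ᵥ x := by
  rw [← dotProduct_transpose_mulVec, hM.eq]

theorem IsSymm.sub_dotProduct_mulVec_add {M : Matrix ι ι R} (hM : M.IsSymm) (x y : ι → R) :
    (x - y) ⬝ᵥ M *ᵥ (x + y) = x ⬝ᵥ M *ᵥ x - y ⬝ᵥ M *ᵥ y := by
  rw [mulVec_add, dotProduct_add, sub_dotProduct, sub_dotProduct, hM.dotProduct_mulVec_comm y x]
  ring

end Matrix

namespace Leapfrog

variable {𝕜 : Type*} [Field 𝕜] {ι κ : Type*} [Fintype ι] [Fintype κ] (τ : 𝕜)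

theorem magnetic_balance {Mh : Matrix ι ι 𝕜} (hMh : Mh.IsSymm) (C : Matrix ι κ 𝕜)
    {h₀ h₁ h₂ : ι → 𝕜} {e₀ e₁ : κ → 𝕜}
    (heq₀ : Mh *ᵥ (τ⁻¹ • (h₁ - h₀)) + C *ᵥ e₀ = 0)
    (heq₁ : Mh *ᵥ (τ⁻¹ • (h₂ - h₁)) + C *ᵥ e₁ = 0) :
    τ⁻¹ * (h₂ ⬝ᵥ Mh *ᵥ h₁ - h₁ ⬝ᵥ Mh *ᵥ h₀) = -(h₁ ⬝ᵥ C *ᵥ (e₁ + e₀)) := by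
  calc τ⁻¹ * (h₂ ⬝ᵥ Mh *ᵥ h₁ - h₁ ⬝ᵥ Mh *ᵥ h₀)
      = h₁ ⬝ᵥ Mh *ᵥ (τ⁻¹ • (h₂ - h₁)) + h₁ ⬝ᵥ Mh *ᵥ (τ⁻¹ • (h₁ - h₀)) := by
        simp only [mulVec_smul, dotProduct_smul, mulVec_sub, dotProduct_sub, smul_eq_mul,
          hMh.dotProduct_mulVec_comm h₂]
        ring
    _ = -(h₁ ⬝ᵥ C *ᵥ (e₁ + e₀)) := by
        rw [eq_neg_of_add_eq_zero_left heq₀, eq_neg_of_add_eq_zero_left heq₁, mulVec_add]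
        simp only [dotProduct_neg, dotProduct_add]
        ring

theorem electric_balance {Me : Matrix κ κ 𝕜} (hMe : Me.IsSymm) (C : Matrix ι κ 𝕜)
    {h : ι → 𝕜} {e₀ e₁ : κ → 𝕜} {J : κ → 𝕜}
    (heq : Me *ᵥ (τ⁻¹ • (e₁ - e₀)) + J - Cᵀ *ᵥ h = 0) :
    τ⁻¹ * (e₁ ⬝ᵥ Me *ᵥ e₁ - e₀ ⬝ᵥ Me *ᵥ e₀) = h ⬝ᵥ C *ᵥ (e₁ + e₀) - (e₁ + e₀) ⬝ᵥ J := by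
  have hMeq : Me *ᵥ (τ⁻¹ • (e₁ - e₀)) = Cᵀ *ᵥ h - J := by
    rw [← sub_eq_zero, ← heq]; abel
  rw [← hMe.sub_dotProduct_mulVec_add, hMe.dotProduct_mulVec_comm, ← smul_eq_mul,
    ← dotProduct_smul, ← mulVec_smul, hMeq, dotProduct_sub, dotProduct_transpose_mulVec]

theorem polarization_balance {Mp : Matrix κ κ 𝕜} (hMp : Mp.IsSymm) (Md : Matrix κ κ 𝕜)
    {p₀ p₁ e₀ e₁ : κ → 𝕜}
    (heq : Md *ᵥ (τ⁻¹ • (p₁ - p₀)) + Mp *ᵥ ((2 : 𝕜)⁻¹ • (p₁ + p₀)) = (2 : 𝕜)⁻¹ • (e₁ + e₀)) :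
    τ⁻¹ * (2⁻¹ * (p₁ ⬝ᵥ Mp *ᵥ p₁ - p₀ ⬝ᵥ Mp *ᵥ p₀))
      = 2⁻¹ * ((e₁ + e₀) ⬝ᵥ (τ⁻¹ • (p₁ - p₀)))
        - (τ⁻¹ • (p₁ - p₀)) ⬝ᵥ Md *ᵥ (τ⁻¹ • (p₁ - p₀)) := by
  have htested := congrArg ((τ⁻¹ • (p₁ - p₀)) ⬝ᵥ ·) heq
  rw [dotProduct_comm (e₁ + e₀)]
  simp only [dotProduct_add, mulVec_smul, dotProduct_smul, smul_dotProduct,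
    hMp.sub_dotProduct_mulVec_add, smul_eq_mul] at htested ⊢
  linear_combination htested

end Leapfrog

open Leapfrog in
/-- Here `h n` denotes `h^{n-1/2}` (so `h (n+1) = h^{n+1/2}`), `e n = e^n`,
and `p i n = p_i^n`. -/
theorem leapfrog_energy_dissipation_general {Nh Ne m : ℕ} (τ : ℝ)
    (Mh : Matrix (Fin Nh) (Fin Nh) ℝ) (Me : Matrix (Fin Ne) (Fin Ne) ℝ)
    (Mp Md : Fin m → Matrix (Fin Ne) (Fin Ne) ℝ)
    (C : Matrix (Fin Nh) (Fin Ne) ℝ)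
    (hMh : Mh.PosDef) (hMe : Me.PosDef)
    (hMp : ∀ i, (Mp i).PosDef)
    (h : ℕ → Fin Nh → ℝ) (e : ℕ → Fin Ne → ℝ) (p : Fin m → ℕ → Fin Ne → ℝ)
    (heq1 : ∀ n, Mh *ᵥ (τ⁻¹ • (h (n + 1) - h n)) + C *ᵥ e n = 0)
    (heq2 : ∀ n, Me *ᵥ (τ⁻¹ • (e (n + 1) - e n))
        + ∑ i, τ⁻¹ • (p i (n + 1) - p i n) - Cᵀ *ᵥ h (n + 1) = 0)
    (heq3 : ∀ i n, Md i *ᵥ (τ⁻¹ • (p i (n + 1) - p i n))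
        + Mp i *ᵥ ((2 : ℝ)⁻¹ • (p i (n + 1) + p i n))
        = (2 : ℝ)⁻¹ • (e (n + 1) + e n))
    (E : ℕ → ℝ)
    (hE : ∀ n, E n = (1 / 2) * (h (n + 1) ⬝ᵥ Mh *ᵥ h n + e n ⬝ᵥ Me *ᵥ e n
        + ∑ i, p i n ⬝ᵥ Mp i *ᵥ p i n)) :
    ∀ n, (E (n + 1) - E n) / τ
      = - ∑ i, (τ⁻¹ • (p i (n + 1) - p i n)) ⬝ᵥ Md i *ᵥ (τ⁻¹ • (p i (n + 1) - p i n)) := by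
  intro n
  have isSymm {k : ℕ} {M : Matrix (Fin k) (Fin k) ℝ} (hM : M.PosDef) : M.IsSymm :=
    isHermitian_iff_isSymm.mp hM.isHermitian
  have hH := magnetic_balance τ (isSymm hMh) C (heq1 n) (heq1 (n + 1))
  have hEl := electric_balance τ (isSymm hMe) C (heq2 n)
  have hP : τ⁻¹ * (2⁻¹ * (∑ i, p i (n + 1) ⬝ᵥ Mp i *ᵥ p i (n + 1)
        - ∑ i, p i n ⬝ᵥ Mp i *ᵥ p i n))
      = 2⁻¹ * ((e (n + 1) + e n) ⬝ᵥ ∑ i, τ⁻¹ • (p i (n + 1) - p i n))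
        - ∑ i, (τ⁻¹ • (p i (n + 1) - p i n)) ⬝ᵥ Md i *ᵥ (τ⁻¹ • (p i (n + 1) - p i n)) := by
    simp only [← Finset.sum_sub_distrib, Finset.mul_sum, dotProduct_sum]
    exact Finset.sum_congr rfl fun i _ => polarization_balance τ (isSymm (hMp i)) (Md i) (heq3 i n)
  rw [div_eq_inv_mul, hE, hE]
  linear_combination (1 / 2 : ℝ) * hH + (1 / 2 : ℝ) * hEl + hP

/-- Discrete energy-dissipation identity for the leapfrog scheme for
Maxwell's equations in dispersive (multipole Debye) media.
Here `h n` denotes `h^{n-1/2}` (so `h (n+1) = h^{n+1/2}`), `e n = e^n`,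
and `p i n = p_i^n`. -/
theorem leapfrog_energy_dissipation {Nh Ne m : ℕ} (τ : ℝ) (hτ : 0 < τ)
    (Mh : Matrix (Fin Nh) (Fin Nh) ℝ) (Me : Matrix (Fin Ne) (Fin Ne) ℝ)
    (Mp Md : Fin m → Matrix (Fin Ne) (Fin Ne) ℝ)
    (C : Matrix (Fin Nh) (Fin Ne) ℝ)
    (hMh : Mh.PosDef) (hMe : Me.PosDef)
    (hMp : ∀ i, (Mp i).PosDef) (hMd : ∀ i, (Md i).PosDef)
    (h : ℕ → Fin Nh → ℝ) (e : ℕ → Fin Ne → ℝ) (p : Fin m → ℕ → Fin Ne → ℝ)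
    (heq1 : ∀ n, Mh *ᵥ (τ⁻¹ • (h (n + 1) - h n)) + C *ᵥ e n = 0)
    (heq2 : ∀ n, Me *ᵥ (τ⁻¹ • (e (n + 1) - e n))
        + ∑ i, τ⁻¹ • (p i (n + 1) - p i n) - Cᵀ *ᵥ h (n + 1) = 0)
    (heq3 : ∀ i n, Md i *ᵥ (τ⁻¹ • (p i (n + 1) - p i n))
        + Mp i *ᵥ ((2 : ℝ)⁻¹ • (p i (n + 1) + p i n))
        = (2 : ℝ)⁻¹ • (e (n + 1) + e n))
    (E : ℕ → ℝ)
    (hE : ∀ n, E n = (1 / 2) * (h (n + 1) ⬝ᵥ Mh *ᵥ h n + e n ⬝ᵥ Me *ᵥ e n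
        + ∑ i, p i n ⬝ᵥ Mp i *ᵥ p i n)) :
    ∀ n, (E (n + 1) - E n) / τ
      = - ∑ i, (τ⁻¹ • (p i (n + 1) - p i n)) ⬝ᵥ Md i *ᵥ (τ⁻¹ • (p i (n + 1) - p i n)) :=
  leapfrog_energy_dissipation_general τ Mh Me Mp Md C hMh hMe hMp h e p heq1 heq2 heq3 E hE
end

section
/- Under the CFL condition τ² ‖C e‖²_{M_h^{-1}} ≤ ‖e‖²_{M_e} for all e, and the relation M_h(h^{k+1/2}-h^{k-1/2}) = -τ C e^k, the quantity E^k = ½( (h^{k+1/2})ᵀ M_h h^{k-1/2} + ‖e^k‖²_{M_e} + Σ_i ‖p_i^k‖²_{M_{p,i}} ) is nonnegative; in particular E^k ≥ ¼ ‖h^{k+1/2}‖²_{M_h} + ¼ ‖e^k‖²_{M_e}. -/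
/-!
Write `w = C e^k`. The leapfrog relation gives `M_h h^{k-1/2} = M_h h^{k+1/2} + τ w`, so the
indefinite cross term is `(h^{k+1/2})ᵀ M_h h^{k-1/2} = ‖h^{k+1/2}‖²_{M_h} + τ (h^{k+1/2})ᵀ w`.
Expanding `‖x - M_h⁻¹ y‖²_{M_h} ≥ 0` gives `2 xᵀ y ≤ ‖x‖²_{M_h} + ‖y‖²_{M_h⁻¹}`; with `x = h^{k+1/2}`,
`y = -τ w` and the CFL condition, `-2τ (h^{k+1/2})ᵀ w ≤ ‖h^{k+1/2}‖²_{M_h} + ‖e^k‖²_{M_e}`.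
Hence the cross term plus `‖e^k‖²_{M_e}` is at least half of
`‖h^{k+1/2}‖²_{M_h} + ‖e^k‖²_{M_e}`, and the `p_i` terms are nonnegative.
-/

open Matrix

section

variable {m n : Type*} [Fintype m] [Fintype n]

theorem Matrix.PosSemidef.dotProduct_mulVec_self_nonneg {R : Type*} [Ring R] [PartialOrder R]
    [StarRing R] [TrivialStar R] {M : Matrix n n R} (hM : M.PosSemidef) (x : n → R) :
    0 ≤ x ⬝ᵥ M *ᵥ x := by
  simpa using hM.dotProduct_mulVec_nonneg x

theorem Matrix.IsSymm.dotProduct_mulVec_comm_s2 {α : Type*} [CommSemiring α] {M : Matrix n n α}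
    (hM : M.IsSymm) (x y : n → α) : x ⬝ᵥ M *ᵥ y = y ⬝ᵥ M *ᵥ x := by
  rw [dotProduct_mulVec, ← mulVec_transpose, hM.eq, dotProduct_comm]

section Field

variable {K : Type*} [Field K]

theorem Matrix.PosDef.two_mul_dotProduct_le [LinearOrder K] [IsStrictOrderedRing K] [StarRing K]
    [TrivialStar K] [DecidableEq n] {M : Matrix n n K} (hM : M.PosDef) (x y : n → K) :
    2 * (x ⬝ᵥ y) ≤ x ⬝ᵥ M *ᵥ x + y ⬝ᵥ M⁻¹ *ᵥ y := by
  set u := M⁻¹ *ᵥ y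
  have hu : M *ᵥ u = y := by
    rw [mulVec_mulVec, mul_nonsing_inv M ((isUnit_iff_isUnit_det M).mp hM.isUnit), one_mulVec]
  have hsymm : u ⬝ᵥ M *ᵥ x = x ⬝ᵥ M *ᵥ u :=
    (isHermitian_iff_isSymm.mp hM.isHermitian).dotProduct_mulVec_comm_s2 u x
  have hnonneg := hM.posSemidef.dotProduct_mulVec_self_nonneg (x - u)
  rw [mulVec_sub, dotProduct_sub, sub_dotProduct, sub_dotProduct, hsymm, hu,
    dotProduct_comm u y] at hnonneg
  linarith

theorem mulVec_eq_add_smul_of_leapfrog {τ : K} (hτ : τ ≠ 0) (M : Matrix m m K)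
    (C : Matrix m n K) (h0 h1 : m → K) (e : n → K)
    (hrel : M *ᵥ (τ⁻¹ • (h1 - h0)) + C *ᵥ e = 0) :
    M *ᵥ h0 = M *ᵥ h1 + τ • C *ᵥ e := by
  rw [mulVec_smul, mulVec_sub, add_eq_zero_iff_eq_neg, inv_smul_eq_iff₀ hτ] at hrel
  linear_combination (norm := module) -hrel

theorem leapfrog_cross_term_add_ge [LinearOrder K] [IsStrictOrderedRing K] [StarRing K]
    [TrivialStar K] [DecidableEq m] {τ : K} (hτ : τ ≠ 0) {Mh : Matrix m m K}
    (hMh : Mh.PosDef) (Me : Matrix n n K) (C : Matrix m n K) (h0 h1 : m → K) (e : n → K)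
    (hCFL : τ ^ 2 * ((C *ᵥ e) ⬝ᵥ Mh⁻¹ *ᵥ (C *ᵥ e)) ≤ e ⬝ᵥ Me *ᵥ e)
    (hrel : Mh *ᵥ (τ⁻¹ • (h1 - h0)) + C *ᵥ e = 0) :
    (h1 ⬝ᵥ Mh *ᵥ h1 + e ⬝ᵥ Me *ᵥ e) / 2 ≤ h1 ⬝ᵥ Mh *ᵥ h0 + e ⬝ᵥ Me *ᵥ e := by
  have hcross : h1 ⬝ᵥ Mh *ᵥ h0 = h1 ⬝ᵥ Mh *ᵥ h1 + τ * (h1 ⬝ᵥ C *ᵥ e) := by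
    rw [mulVec_eq_add_smul_of_leapfrog hτ Mh C h0 h1 e hrel, dotProduct_add, dotProduct_smul,
      smul_eq_mul]
  have hbound := hMh.two_mul_dotProduct_le h1 (-(τ • C *ᵥ e))
  simp only [mulVec_neg, mulVec_smul, dotProduct_neg, neg_dotProduct, dotProduct_smul,
    smul_dotProduct, smul_eq_mul] at hbound
  rw [hcross]
  linear_combination (hbound + hCFL) / 2

end Field

end

/-- `h0 = h^{k-1/2}`, `h1 = h^{k+1/2}`, `ek = e^k`, `pk i = p_i^k`. -/
theorem discrete_energy_nonneg {Nh Ne m : ℕ} (τ : ℝ) (hτ : 0 < τ)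
    (Mh : Matrix (Fin Nh) (Fin Nh) ℝ) (Me : Matrix (Fin Ne) (Fin Ne) ℝ)
    (Mp : Fin m → Matrix (Fin Ne) (Fin Ne) ℝ)
    (C : Matrix (Fin Nh) (Fin Ne) ℝ)
    (hMh : Mh.PosDef) (hMe : Me.PosDef) (hMp : ∀ i, (Mp i).PosDef)
    (hCFL : ∀ e : Fin Ne → ℝ,
      τ ^ 2 * ((C *ᵥ e) ⬝ᵥ Mh⁻¹ *ᵥ (C *ᵥ e)) ≤ e ⬝ᵥ Me *ᵥ e)
    (h0 h1 : Fin Nh → ℝ) (ek : Fin Ne → ℝ) (pk : Fin m → Fin Ne → ℝ)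
    (hrel : Mh *ᵥ (τ⁻¹ • (h1 - h0)) + C *ᵥ ek = 0)
    (E : ℝ)
    (hE : E = (1 / 2) * (h1 ⬝ᵥ Mh *ᵥ h0 + ek ⬝ᵥ Me *ᵥ ek
        + ∑ i, pk i ⬝ᵥ Mp i *ᵥ pk i)) :
    0 ≤ E ∧
      E ≥ (1 / 4) * (h1 ⬝ᵥ Mh *ᵥ h1) + (1 / 4) * (ek ⬝ᵥ Me *ᵥ ek) := by
  have hbound := leapfrog_cross_term_add_ge hτ.ne' hMh Me C h0 h1 ek (hCFL ek) hrel
  have hh1 := hMh.posSemidef.dotProduct_mulVec_self_nonneg h1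
  have hek := hMe.posSemidef.dotProduct_mulVec_self_nonneg ek
  have hpk : 0 ≤ ∑ i, pk i ⬝ᵥ Mp i *ᵥ pk i :=
    Finset.sum_nonneg fun i _ ↦ (hMp i).posSemidef.dotProduct_mulVec_self_nonneg (pk i)
  subst hE
  constructor <;> linarith
end

section
/- Let χ̂(s) = Σ_{i=1}^m a_i/(1+s τ_i) with a_i ≥ 0, τ_i > 0, and let ω_n be the coefficients of the power series expansion of χ̂(2(1−ξ)/(τ(1+ξ))) in ξ. Suppose for each i, sequences p_i^n with p_i^0 = 0 satisfy the trapezoidal recursion τ_i(p_i^{n+1}-p_i^n)/τ + (p_i^{n+1}+p_i^n)/2 = a_i (e^{n+1}+e^n)/2, where e^0 = 0. Then the total polarization p^n = Σ_{i=1}^m p_i^n satisfies the convolution quadrature formula p^n = Σ_{k=0}^n ω_{n−k} e^k for all n ≥ 0. -/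
/-!
Solving the one-step trapezoidal recursion of a single Debye pole gives
`pᵢⁿ = ∑ₖ wᵢ(n-k) eᵏ` with explicit weights `wᵢ(0) = Bᵢ`, `wᵢ(n+1) = Bᵢ(1+Aᵢ)Aᵢⁿ`, where
`Aᵢ = (2τᵢ-τ)/(2τᵢ+τ)` and `Bᵢ = aᵢτ/(2τᵢ+τ)`. Since `|Aᵢ| < 1`, the generating function of these
weights is a geometric series summing to the `i`-th term of `χ̂(2(1-ξ)/(τ(1+ξ)))` for `|ξ| < 1`;
uniqueness of power series coefficients then identifies `ω` with `∑ᵢ wᵢ`.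
-/

open Finset FormalMultilinearSeries

section PowerSeries

variable {𝕜 : Type*} [NontriviallyNormedField 𝕜]

theorem hasFPowerSeriesAt_ofScalars_of_hasSum {c : ℕ → 𝕜} {f : 𝕜 → 𝕜} {ε : ℝ} (hε : 0 < ε)
    (h : ∀ ξ : 𝕜, ‖ξ‖ < ε → HasSum (fun n => c n * ξ ^ n) (f ξ)) :
    HasFPowerSeriesAt f (ofScalars 𝕜 c) 0 := by
  obtain ⟨x, hx0, hxε⟩ := NormedField.exists_norm_lt 𝕜 hε
  have hradius : (‖x‖₊ : ENNReal) ≤ (ofScalars 𝕜 c).radius := by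
    refine (ofScalars 𝕜 c).le_radius_of_tendsto (l := 0) ?_
    simpa [ofScalars_norm, norm_mul, norm_pow] using (h x hxε).summable.tendsto_atTop_zero.norm
  refine ⟨‖x‖₊, hradius, by simpa using hx0, fun {y} hy => ?_⟩
  rw [Metric.eball_coe, mem_ball_zero_iff] at hy
  simpa [ofScalars_apply_eq, mul_comm] using h y (hy.trans hxε)

theorem eq_of_hasSum_mul_pow {c d : ℕ → 𝕜} {f : 𝕜 → 𝕜} {ε δ : ℝ} (hε : 0 < ε) (hδ : 0 < δ)
    (hc : ∀ ξ : 𝕜, ‖ξ‖ < ε → HasSum (fun n => c n * ξ ^ n) (f ξ))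
    (hd : ∀ ξ : 𝕜, ‖ξ‖ < δ → HasSum (fun n => d n * ξ ^ n) (f ξ)) : c = d :=
  ofScalars_series_injective 𝕜 𝕜 <|
    (hasFPowerSeriesAt_ofScalars_of_hasSum hε hc).eq_formalMultilinearSeries
      (hasFPowerSeriesAt_ofScalars_of_hasSum hδ hd)

end PowerSeries

section Recursion

variable {R M : Type*} [CommRing R] [AddCommGroup M] [Module R M]

def trapezoidWeight (B A : R) : ℕ → R
  | 0 => B
  | n + 1 => B * (1 + A) * A ^ n

theorem trapezoidWeight_succ (B A : R) (n : ℕ) :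
    trapezoidWeight B A (n + 1) = A * trapezoidWeight B A n + if n = 0 then B else 0 := by
  cases n <;> simp [trapezoidWeight] <;> ring

theorem sum_range_trapezoidWeight_smul_succ (B A : R) (e : ℕ → M) (n : ℕ) :
    ∑ k ∈ range (n + 2), trapezoidWeight B A (n + 1 - k) • e k
      = A • ∑ k ∈ range (n + 1), trapezoidWeight B A (n - k) • e k + B • (e (n + 1) + e n) := by
  have hshift : ∀ k ∈ range (n + 1), trapezoidWeight B A (n + 1 - k) • e k
      = A • trapezoidWeight B A (n - k) • e k + if k = n then B • e k else 0 := by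
    intro k hk
    have hkn : k ≤ n := mem_range_succ_iff.mp hk
    rw [show n + 1 - k = n - k + 1 by omega, trapezoidWeight_succ, add_smul, smul_smul]
    by_cases hk : k = n <;> simp [hk, Nat.sub_eq_zero_iff_le, hkn.lt_of_ne]
  rw [sum_range_succ, sum_congr rfl hshift, sum_add_distrib, sum_ite_eq' _ _ (fun k => B • e k),
    if_pos (self_mem_range_succ n), ← smul_sum, Nat.sub_self, smul_add]
  simp only [trapezoidWeight]
  abel

theorem eq_sum_range_trapezoidWeight_smul {B A : R} {p e : ℕ → M} (h0 : p 0 = B • e 0)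
    (hrec : ∀ n, p (n + 1) = A • p n + B • (e (n + 1) + e n)) (n : ℕ) :
    p n = ∑ k ∈ range (n + 1), trapezoidWeight B A (n - k) • e k := by
  induction n with
  | zero => simpa [trapezoidWeight] using h0
  | succ n ih => rw [hrec, ih, sum_range_trapezoidWeight_smul_succ]

end Recursion

theorem hasSum_trapezoidWeight_mul_pow {𝕜 : Type*} [NormedField 𝕜] [CompleteSpace 𝕜]
    {B A ξ : 𝕜} (h : ‖A * ξ‖ < 1) :
    HasSum (fun n => trapezoidWeight B A n * ξ ^ n) (B * (1 + ξ) / (1 - A * ξ)) := by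
  have hne : 1 - A * ξ ≠ 0 :=
    sub_ne_zero.mpr fun h1 => by rw [← h1, norm_one] at h; exact lt_irrefl _ h
  have htail : HasSum (fun n => trapezoidWeight B A (n + 1) * ξ ^ (n + 1))
      (B * (1 + A) * ξ * (1 - A * ξ)⁻¹) :=
    ((hasSum_geometric_of_norm_lt_one h).mul_left (B * (1 + A) * ξ)).congr_fun fun n => by
      simp only [trapezoidWeight]; ring
  have hsplit : B * (1 + ξ) / (1 - A * ξ)
      = B * (1 + A) * ξ * (1 - A * ξ)⁻¹ + ∑ n ∈ range 1, trapezoidWeight B A n * ξ ^ n := by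
    rw [range_one, sum_singleton, pow_zero, mul_one, div_eq_iff hne, add_mul,
      inv_mul_cancel_right₀ hne]
    simp only [trapezoidWeight]
    ring
  rw [hsplit]
  exact (hasSum_nat_add_iff 1).mp htail

section Debye

/-- The convolution weights of a single Debye pole `a / (1 + s τᵢ)` under the trapezoidal rule
with step `τ`. -/
noncomputable def debyeWeight (τ a τi : ℝ) : ℕ → ℝ :=
  trapezoidWeight (a * τ / (2 * τi + τ)) ((2 * τi - τ) / (2 * τi + τ))

theorem debye_trapezoid_step {M : Type*} [AddCommGroup M] [Module ℝ M] {τ a τi : ℝ}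
    (hτ : τ ≠ 0) (hden : 2 * τi + τ ≠ 0) {p p' e e' : M}
    (h : τi • (τ⁻¹ • (p' - p)) + (2 : ℝ)⁻¹ • (p' + p) = a • ((2 : ℝ)⁻¹ • (e' + e))) :
    p' = ((2 * τi - τ) / (2 * τi + τ)) • p + (a * τ / (2 * τi + τ)) • (e' + e) := by
  linear_combination (norm := match_scalars) (2 * τ / (2 * τi + τ)) • h
  all_goals field_simp
  all_goals ring

theorem hasSum_debyeWeight_mul_pow {τ a τi ξ : ℝ} (hτ : 0 < τ) (hτi : 0 < τi) (hξ : |ξ| < 1) :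
    HasSum (fun n => debyeWeight τ a τi n * ξ ^ n)
      (a * τ * (1 + ξ) / (τ * (1 + ξ) + 2 * τi * (1 - ξ))) := by
  have hden : 0 < 2 * τi + τ := by linarith
  have hA : |(2 * τi - τ) / (2 * τi + τ)| < 1 := by
    rw [abs_div, abs_of_pos hden, div_lt_one hden, abs_lt]
    constructor <;> linarith
  have hAξ : ‖(2 * τi - τ) / (2 * τi + τ) * ξ‖ < 1 := by
    rw [Real.norm_eq_abs, abs_mul]
    exact mul_lt_one_of_nonneg_of_lt_one_left (abs_nonneg _) hA hξ.le
  have hdenξ : 1 - (2 * τi - τ) / (2 * τi + τ) * ξ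
      = (τ * (1 + ξ) + 2 * τi * (1 - ξ)) / (2 * τi + τ) := by
    field_simp
    ring
  have hsum : a * τ * (1 + ξ) / (τ * (1 + ξ) + 2 * τi * (1 - ξ))
      = a * τ / (2 * τi + τ) * (1 + ξ) / (1 - (2 * τi - τ) / (2 * τi + τ) * ξ) := by
    rw [hdenξ]
    field_simp
  rw [hsum]
  exact hasSum_trapezoidWeight_mul_pow hAξ

end Debye

theorem debye_convolution_quadrature_equivalence_general {N m : ℕ}
    (τ : ℝ) (hτ : 0 < τ) (a τi : Fin m → ℝ)
    (hτi : ∀ i, 0 < τi i)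
    (ω : ℕ → ℝ)
    (hω : ∃ ε > 0, ∀ ξ : ℝ, |ξ| < ε →
      HasSum (fun n => ω n * ξ ^ n)
        (∑ i, a i * τ * (1 + ξ) / (τ * (1 + ξ) + 2 * τi i * (1 - ξ))))
    (e : ℕ → Fin N → ℝ) (he0 : e 0 = 0)
    (p : Fin m → ℕ → Fin N → ℝ) (hp0 : ∀ i, p i 0 = 0)
    (hrec : ∀ i n, τi i • (τ⁻¹ • (p i (n + 1) - p i n))
        + (2 : ℝ)⁻¹ • (p i (n + 1) + p i n)
        = a i • ((2 : ℝ)⁻¹ • (e (n + 1) + e n))) :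
    ∀ n, (∑ i, p i n) = ∑ k ∈ Finset.range (n + 1), ω (n - k) • e k := by
  obtain ⟨ε, hε, hωε⟩ := hω
  have hω_eq : ω = fun n => ∑ i, debyeWeight τ (a i) (τi i) n :=
    eq_of_hasSum_mul_pow hε one_pos hωε fun ξ hξ => by
      simpa only [sum_mul] using hasSum_sum fun i _ =>
        hasSum_debyeWeight_mul_pow (a := a i) hτ (hτi i) hξ
  have hp : ∀ i n, p i n = ∑ k ∈ range (n + 1), debyeWeight τ (a i) (τi i) (n - k) • e k :=
    fun i => eq_sum_range_trapezoidWeight_smul (by rw [hp0, he0, smul_zero]) fun n =>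
      debye_trapezoid_step hτ.ne' (by linarith [hτi i]) (hrec i n)
  intro n
  simp only [hω_eq, hp, sum_smul]
  exact sum_comm

/-- Equivalence of the internal-state trapezoidal scheme and the convolution
quadrature formula for the multipole Debye model: if `ω n` are the Taylor
coefficients at `ξ = 0` of `ξ ↦ χ̂(2(1-ξ)/(τ(1+ξ))) = ∑ i, aᵢτ(1+ξ)/(τ(1+ξ)+2τᵢ(1-ξ))`,
then the total polarization `p^n = ∑ i, pᵢ^n` is the discrete convolution of the
weights with the electric field history. -/
theorem debye_convolution_quadrature_equivalence {N m : ℕ}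
    (τ : ℝ) (hτ : 0 < τ) (a τi : Fin m → ℝ)
    (ha : ∀ i, 0 ≤ a i) (hτi : ∀ i, 0 < τi i)
    (ω : ℕ → ℝ)
    (hω : ∃ ε > 0, ∀ ξ : ℝ, |ξ| < ε →
      HasSum (fun n => ω n * ξ ^ n)
        (∑ i, a i * τ * (1 + ξ) / (τ * (1 + ξ) + 2 * τi i * (1 - ξ))))
    (e : ℕ → Fin N → ℝ) (he0 : e 0 = 0)
    (p : Fin m → ℕ → Fin N → ℝ) (hp0 : ∀ i, p i 0 = 0)
    (hrec : ∀ i n, τi i • (τ⁻¹ • (p i (n + 1) - p i n))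
        + (2 : ℝ)⁻¹ • (p i (n + 1) + p i n)
        = a i • ((2 : ℝ)⁻¹ • (e (n + 1) + e n))) :
    ∀ n, (∑ i, p i n) = ∑ k ∈ Finset.range (n + 1), ω (n - k) • e k :=
  debye_convolution_quadrature_equivalence_general τ hτ a τi hτi ω hω e he0 p hp0 hrec
end

section
/- Let e, h, p_i : [0,T] → V be smooth fields with values in a real inner product space, satisfying the abstract Maxwell–Debye system: μ₀ h' = −Ce, ε₀ε_∞ e' + Σ_i p_i' = Cᵀh, and τ_i p_i' + p_i = ε₀(ε_{i,s}−ε'_{i,∞}) e, where C is a linear operator with adjoint Cᵀ. Define E(t) = ½( μ₀‖h‖² + ε₀ε_∞‖e‖² + Σ_i ‖p_i‖²/(ε₀(ε_{i,s}−ε'_{i,∞})) ). Then dE/dt = − Σ_i (τ_i/(ε₀(ε_{i,s}−ε'_{i,∞}))) ‖p_i'‖², so E is nonincreasing. -/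
open scoped RealInnerProductSpace

/-!
Differentiating the energy gives `μ₀⟪h, h'⟫ + ε₀ε_∞⟪e, e'⟫ + ∑ᵢ ⟪pᵢ, pᵢ'⟫ / cᵢ` with
`cᵢ = ε₀(ε_{i,s} - ε'_{i,∞})`. The Debye relaxation law gives `pᵢ = cᵢ e - τᵢ pᵢ'`, so the
polarization terms become `⟪e, pᵢ'⟫ - (τᵢ/cᵢ)‖pᵢ'‖²`. The remaining Maxwell terms
`μ₀⟪h, h'⟫ + ⟪e, ε₀ε_∞ e' + ∑ᵢ pᵢ'⟫ = -⟪Ce, h⟫ + ⟪e, Cᵀh⟫` cancel by adjointness,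
leaving only the nonpositive dissipation.
-/

section PowerBalance

variable {V W ι : Type*} [NormedAddCommGroup V] [InnerProductSpace ℝ V]
  [NormedAddCommGroup W] [InnerProductSpace ℝ W]

theorem inner_div_eq_of_relaxation {τ c : ℝ} (hc : c ≠ 0) {e p p' : V}
    (hrel : τ • p' + p = c • e) :
    ⟪p, p'⟫ / c = ⟪e, p'⟫ - τ / c * ‖p'‖ ^ 2 := by
  have hp : p = c • e - τ • p' := eq_sub_of_add_eq' hrel
  rw [hp, inner_sub_left, real_inner_smul_left, real_inner_smul_left,
    real_inner_self_eq_norm_sq]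
  field_simp

theorem maxwell_power_balance {C : V →ₗ[ℝ] W} {Ct : W →ₗ[ℝ] V}
    (hadj : ∀ (v : V) (w : W), ⟪C v, w⟫ = ⟪v, Ct w⟫) {μ ε : ℝ} {e e' j : V} {h h' : W}
    (hfaraday : μ • h' = -C e) (hampere : ε • e' + j = Ct h) :
    μ * ⟪h, h'⟫ + ε * ⟪e, e'⟫ + ⟪e, j⟫ = 0 := by
  have hmag : μ * ⟪h, h'⟫ = -⟪e, Ct h⟫ := by
    rw [← real_inner_smul_right, hfaraday, inner_neg_right, real_inner_comm, hadj]
  have hel : ε * ⟪e, e'⟫ + ⟪e, j⟫ = ⟪e, Ct h⟫ := by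
    rw [← hampere, inner_add_right, real_inner_smul_right]
  linarith

variable [Fintype ι]

theorem maxwellDebye_power_balance {C : V →ₗ[ℝ] W} {Ct : W →ₗ[ℝ] V}
    (hadj : ∀ (v : V) (w : W), ⟪C v, w⟫ = ⟪v, Ct w⟫) {μ ε : ℝ} {τ c : ι → ℝ}
    (hc : ∀ i, c i ≠ 0) {e e' : V} {h h' : W} {p p' : ι → V}
    (hfaraday : μ • h' = -C e) (hampere : ε • e' + ∑ i, p' i = Ct h)
    (hrel : ∀ i, τ i • p' i + p i = c i • e) :
    μ * ⟪h, h'⟫ + ε * ⟪e, e'⟫ + ∑ i, ⟪p i, p' i⟫ / c i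
      = -∑ i, τ i / c i * ‖p' i‖ ^ 2 := by
  have hmaxwell := maxwell_power_balance hadj hfaraday hampere
  simp only [fun i ↦ inner_div_eq_of_relaxation (hc i) (hrel i), Finset.sum_sub_distrib,
    ← inner_sum] at hmaxwell ⊢
  linarith

theorem hasDerivWithinAt_maxwellDebye_energy {s : Set ℝ} {t : ℝ} (μ ε : ℝ) (c : ι → ℝ)
    {e : ℝ → V} {h : ℝ → W} {p : ι → ℝ → V} {e' : V} {h' : W} {p' : ι → V}
    (he : HasDerivWithinAt e e' s t) (hh : HasDerivWithinAt h h' s t)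
    (hp : ∀ i, HasDerivWithinAt (p i) (p' i) s t) :
    HasDerivWithinAt
      (fun t ↦ 1 / 2 * (μ * ‖h t‖ ^ 2 + ε * ‖e t‖ ^ 2 + ∑ i, ‖p i t‖ ^ 2 / c i))
      (μ * ⟪h t, h'⟫ + ε * ⟪e t, e'⟫ + ∑ i, ⟪p i t, p' i⟫ / c i) s t := by
  refine ((((hh.norm_sq.const_mul μ).add (he.norm_sq.const_mul ε)).add
    (HasDerivWithinAt.fun_sum fun i _ ↦ (hp i).norm_sq.div_const (c i))).const_mul
    (1 / 2)).congr_deriv ?_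
  simp only [mul_div_assoc, ← Finset.mul_sum]
  ring

end PowerBalance

theorem maxwell_debye_energy_dissipation_general
    {V W : Type*} [NormedAddCommGroup V] [InnerProductSpace ℝ V]
    [NormedAddCommGroup W] [InnerProductSpace ℝ W]
    {m : ℕ} (T : ℝ)
    (μ0 ε0 εinfty : ℝ) (hε0 : 0 < ε0)
    (τi εs εinf : Fin m → ℝ) (hτi : ∀ i, 0 < τi i)
    (hεs : ∀ i, εinf i < εs i)
    (C : V →ₗ[ℝ] W) (Ct : W →ₗ[ℝ] V)
    (hadj : ∀ (v : V) (w : W), ⟪C v, w⟫ = ⟪v, Ct w⟫)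
    (e e' : ℝ → V) (h h' : ℝ → W) (p p' : Fin m → ℝ → V)
    (hde : ∀ t ∈ Set.Icc 0 T, HasDerivWithinAt e (e' t) (Set.Icc 0 T) t)
    (hdh : ∀ t ∈ Set.Icc 0 T, HasDerivWithinAt h (h' t) (Set.Icc 0 T) t)
    (hdp : ∀ i, ∀ t ∈ Set.Icc 0 T,
      HasDerivWithinAt (p i) (p' i t) (Set.Icc 0 T) t)
    (heq1 : ∀ t ∈ Set.Icc 0 T, μ0 • h' t = -(C (e t)))
    (heq2 : ∀ t ∈ Set.Icc 0 T,
      (ε0 * εinfty) • e' t + ∑ i, p' i t = Ct (h t))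
    (heq3 : ∀ i, ∀ t ∈ Set.Icc 0 T,
      τi i • p' i t + p i t = (ε0 * (εs i - εinf i)) • e t)
    (E : ℝ → ℝ)
    (hE : ∀ t, E t = (1 / 2) * (μ0 * ‖h t‖ ^ 2 + ε0 * εinfty * ‖e t‖ ^ 2
        + ∑ i, ‖p i t‖ ^ 2 / (ε0 * (εs i - εinf i)))) :
    (∀ t ∈ Set.Icc 0 T,
      HasDerivWithinAt E
        (-(∑ i, τi i / (ε0 * (εs i - εinf i)) * ‖p' i t‖ ^ 2))
        (Set.Icc 0 T) t) ∧
    AntitoneOn E (Set.Icc 0 T) := by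
  have hc : ∀ i, 0 < ε0 * (εs i - εinf i) := fun i ↦ mul_pos hε0 (sub_pos.mpr (hεs i))
  have hderiv : ∀ t ∈ Set.Icc 0 T, HasDerivWithinAt E
      (-(∑ i, τi i / (ε0 * (εs i - εinf i)) * ‖p' i t‖ ^ 2)) (Set.Icc 0 T) t := fun t ht ↦ by
    rw [← maxwellDebye_power_balance hadj (fun i ↦ (hc i).ne') (heq1 t ht) (heq2 t ht)
      (fun i ↦ heq3 i t ht)]
    rw [show E = _ from funext hE]
    exact hasDerivWithinAt_maxwellDebye_energy _ _ _ (hde t ht) (hdh t ht) (fun i ↦ hdp i t ht)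
  refine ⟨hderiv, antitoneOn_of_hasDerivWithinAt_nonpos (convex_Icc 0 T)
    (fun t ht ↦ (hderiv t ht).continuousWithinAt)
    (fun t ht ↦ (hderiv t (interior_subset ht)).mono interior_subset) fun t _ ↦ ?_⟩
  refine neg_nonpos.mpr (Finset.sum_nonneg fun i _ ↦ ?_)
  exact mul_nonneg (div_nonneg (hτi i).le (hc i).le) (sq_nonneg _)

/-- Continuous energy-dissipation identity for the abstract Maxwell–Debye
system: `dE/dt = -∑ i, (τᵢ/(ε₀(ε_{i,s}-ε'_{i,∞}))) ‖pᵢ'‖²` on `[0,T]`, so the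
energy is nonincreasing. -/
theorem maxwell_debye_energy_dissipation
    {V W : Type*} [NormedAddCommGroup V] [InnerProductSpace ℝ V]
    [NormedAddCommGroup W] [InnerProductSpace ℝ W]
    {m : ℕ} (T : ℝ) (hT : 0 < T)
    (μ0 ε0 εinfty : ℝ) (hμ0 : 0 < μ0) (hε0 : 0 < ε0) (hεinfty : 0 < εinfty)
    (τi εs εinf : Fin m → ℝ) (hτi : ∀ i, 0 < τi i)
    (hεs : ∀ i, εinf i < εs i) (hεinf : ∀ i, 0 ≤ εinf i)
    (C : V →ₗ[ℝ] W) (Ct : W →ₗ[ℝ] V)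
    (hadj : ∀ (v : V) (w : W), ⟪C v, w⟫ = ⟪v, Ct w⟫)
    (e e' : ℝ → V) (h h' : ℝ → W) (p p' : Fin m → ℝ → V)
    (hde : ∀ t ∈ Set.Icc 0 T, HasDerivWithinAt e (e' t) (Set.Icc 0 T) t)
    (hdh : ∀ t ∈ Set.Icc 0 T, HasDerivWithinAt h (h' t) (Set.Icc 0 T) t)
    (hdp : ∀ i, ∀ t ∈ Set.Icc 0 T,
      HasDerivWithinAt (p i) (p' i t) (Set.Icc 0 T) t)
    (heq1 : ∀ t ∈ Set.Icc 0 T, μ0 • h' t = -(C (e t)))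
    (heq2 : ∀ t ∈ Set.Icc 0 T,
      (ε0 * εinfty) • e' t + ∑ i, p' i t = Ct (h t))
    (heq3 : ∀ i, ∀ t ∈ Set.Icc 0 T,
      τi i • p' i t + p i t = (ε0 * (εs i - εinf i)) • e t)
    (E : ℝ → ℝ)
    (hE : ∀ t, E t = (1 / 2) * (μ0 * ‖h t‖ ^ 2 + ε0 * εinfty * ‖e t‖ ^ 2
        + ∑ i, ‖p i t‖ ^ 2 / (ε0 * (εs i - εinf i)))) :
    (∀ t ∈ Set.Icc 0 T,
      HasDerivWithinAt E
        (-(∑ i, τi i / (ε0 * (εs i - εinf i)) * ‖p' i t‖ ^ 2))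
        (Set.Icc 0 T) t) ∧
    AntitoneOn E (Set.Icc 0 T) :=
  maxwell_debye_energy_dissipation_general T μ0 ε0 εinfty hε0 τi εs εinf hτi hεs C Ct hadj e e' h h'
    p p' hde hdh hdp heq1 heq2 heq3 E hE
end
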